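/- Let m ≥ 2 be an integer, λ > 0, a < b real numbers, and g : [a, b] → ℝ a continuously differentiable function with g(r) > 0 for all r ∈ [a, b]. Suppose h : [a, b] → ℝ is twice continuously differentiable with h(r) ≥ 0 on [a, b], h(a) = 1, h(b) = 0, and h''(r) + (m-1)·(g'(r)/g(r))·h'(r) = λ·h(r) for all r ∈ [a, b]. Then for every r ∈ [a, b], h(r) ≤ (∫_r^b g(t)^{1-m} dt) / (∫_a^b g(t)^{1-m} dt). -/

import Mathlib

open Set MeasureTheory

open scoped Topology

/-
Put `f = g^{1-m}` and let `u(r) = ∫_r^b f / ∫_a^b f` be the harmonic comparison function, so that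
`g^{m-1} u' = -1 / ∫_a^b f` is constant. The equation says `(g^{m-1} h')' = λ g^{m-1} h ≥ 0`, hence
`g^{m-1} (h - u)'` is nondecreasing. So `(h - u)'` changes sign at most once, from `-` to `+`, and
`h - u` is bounded by its boundary values `h(a) - u(a) = 0 = h(b) - u(b)`.
-/

theorem le_max_of_monotoneOn_mul_deriv {a b : ℝ} {w w' p : ℝ → ℝ}
    (hw : ContinuousOn w (Icc a b)) (hw' : ∀ x ∈ Ioo a b, HasDerivAt w (w' x) x)
    (hp : ∀ x ∈ Ioo a b, 0 < p x) (hmono : MonotoneOn (fun x => p x * w' x) (Ioo a b))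
    {x : ℝ} (hx : x ∈ Icc a b) : w x ≤ max (w a) (w b) := by
  by_cases hinc : ∃ y ∈ Ioo a x, 0 < w' y
  · obtain ⟨y, hy, hy_pos⟩ := hinc
    have hyab : y ∈ Ioo a b := ⟨hy.1, hy.2.trans_le hx.2⟩
    have hw_mono : MonotoneOn w (Icc x b) := by
      refine monotoneOn_of_hasDerivWithinAt_nonneg (f' := w') (convex_Icc x b)
        (hw.mono (Icc_subset_Icc_left hx.1)) (fun z hz => ?_) (fun z hz => ?_) <;>
        rw [interior_Icc] at hz <;>
        have hzab : z ∈ Ioo a b := ⟨hy.1.trans (hy.2.trans hz.1), hz.2⟩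
      · exact (hw' z hzab).hasDerivWithinAt
      · have : 0 < p z * w' z := (mul_pos (hp y hyab) hy_pos).trans_le
          (hmono hyab hzab (hy.2.trans hz.1).le)
        exact (pos_of_mul_pos_right this (hp z hzab).le).le
    exact (hw_mono (left_mem_Icc.2 hx.2) (right_mem_Icc.2 hx.2) hx.2).trans (le_max_right _ _)
  · push Not at hinc
    have hw_anti : AntitoneOn w (Icc a x) := by
      refine antitoneOn_of_hasDerivWithinAt_nonpos (f' := w') (convex_Icc a x)
        (hw.mono (Icc_subset_Icc_right hx.2)) (fun z hz => ?_) (fun z hz => ?_) <;>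
        rw [interior_Icc] at hz
      · exact (hw' z ⟨hz.1, hz.2.trans_le hx.2⟩).hasDerivWithinAt
      · exact hinc z hz
    exact (hw_anti (left_mem_Icc.2 hx.1) (right_mem_Icc.2 hx.1) hx.1).trans (le_max_left _ _)

theorem HasDerivAt.pow_mul_of_ne_zero {g u : ℝ → ℝ} {g' u' r : ℝ} (n : ℕ) (hg : HasDerivAt g g' r)
    (hu : HasDerivAt u u' r) (hgr : g r ≠ 0) :
    HasDerivAt (fun x => g x ^ n * u x) (g r ^ n * (u' + n * (g' / g r) * u r)) r := by
  refine ((hg.fun_pow n).fun_mul hu).congr_deriv ?_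
  cases n with
  | zero => simp
  | succ k => rw [Nat.add_sub_cancel, pow_succ]; push_cast; field_simp; ring

theorem monotoneOn_pow_mul_of_nonneg {a b : ℝ} {n : ℕ} {g g' v v' : ℝ → ℝ}
    (hg : ∀ x ∈ Ioo a b, HasDerivAt g (g' x) x) (hgpos : ∀ x ∈ Ioo a b, 0 < g x)
    (hv : ∀ x ∈ Ioo a b, HasDerivAt v (v' x) x)
    (hnonneg : ∀ x ∈ Ioo a b, 0 ≤ v' x + n * (g' x / g x) * v x) :
    MonotoneOn (fun x => g x ^ n * v x) (Ioo a b) := by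
  have hderiv x (hx : x ∈ Ioo a b) := (hg x hx).pow_mul_of_ne_zero n (hv x hx) (hgpos x hx).ne'
  refine monotoneOn_of_hasDerivWithinAt_nonneg (convex_Ioo a b)
    (f' := fun x => g x ^ n * (v' x + n * (g' x / g x) * v x))
    (fun x hx => (hderiv x hx).continuousAt.continuousWithinAt) (fun x hx => ?_) (fun x hx => ?_) <;>
    rw [interior_Ioo] at hx
  · exact (hderiv x hx).hasDerivWithinAt
  · exact mul_nonneg (pow_pos (hgpos x hx) n).le (hnonneg x hx)

theorem ContDiffOn.hasDerivAt_deriv {f : ℝ → ℝ} {s : Set ℝ} (hf : ContDiffOn ℝ 2 f s) {x : ℝ}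
    (hx : x ∈ interior s) : HasDerivAt (deriv f) (deriv (deriv f) x) x := by
  have hf' : ContDiffOn ℝ 1 (deriv f) (interior s) :=
    (hf.mono interior_subset).deriv_of_isOpen isOpen_interior (by norm_num)
  exact ((hf'.differentiableOn one_ne_zero x hx).differentiableAt
    (isOpen_interior.mem_nhds hx)).hasDerivAt

theorem ContinuousOn.hasDerivAt_integral_left {f : ℝ → ℝ} {a b x : ℝ}
    (hf : ContinuousOn f (Icc a b)) (hx : x ∈ Ioo a b) :
    HasDerivAt (fun u => ∫ t in u..b, f t) (-f x) x :=
  intervalIntegral.integral_hasDerivAt_left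
    ((hf.mono (Icc_subset_Icc_left hx.1.le)).intervalIntegrable_of_Icc hx.2.le)
    ((hf.mono Ioo_subset_Icc_self).stronglyMeasurableAtFilter isOpen_Ioo x hx)
    (hf.continuousAt (Icc_mem_nhds hx.1 hx.2))

theorem ContinuousOn.continuousOn_integral_left {f : ℝ → ℝ} {a b : ℝ} (hab : a ≤ b)
    (hf : ContinuousOn f (Icc a b)) : ContinuousOn (fun u => ∫ t in u..b, f t) (Icc a b) := by
  have := intervalIntegral.continuousOn_primitive_interval_left (μ := volume)
    (by rw [uIcc_of_le hab]; exact hf.integrableOn_Icc)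
  rwa [uIcc_of_le hab] at this

theorem le_integral_inv_div_of_monotoneOn {a b r : ℝ} {p h h' : ℝ → ℝ} (hab : a < b)
    (hp : ContinuousOn p (Icc a b)) (hppos : ∀ x ∈ Icc a b, 0 < p x)
    (hh : ContinuousOn h (Icc a b)) (hh' : ∀ x ∈ Ioo a b, HasDerivAt h (h' x) x)
    (hmono : MonotoneOn (fun x => p x * h' x) (Ioo a b)) (ha : h a = 1) (hb : h b = 0)
    (hr : r ∈ Icc a b) : h r ≤ (∫ t in r..b, (p t)⁻¹) / ∫ t in a..b, (p t)⁻¹ := by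
  set f : ℝ → ℝ := fun t => (p t)⁻¹
  set I := ∫ t in a..b, f t
  have hf : ContinuousOn f (Icc a b) := hp.inv₀ fun t ht => (hppos t ht).ne'
  have hI : 0 < I := intervalIntegral.intervalIntegral_pos_of_pos_on
    (hf.intervalIntegrable_of_Icc hab.le) (fun t ht => inv_pos.2 (hppos t (Ioo_subset_Icc_self ht)))
    hab
  have key := le_max_of_monotoneOn_mul_deriv (p := p)
    (w := fun x => h x - (∫ t in x..b, f t) / I) (w' := fun x => h' x + f x / I)
    (hh.sub ((hf.continuousOn_integral_left hab.le).div_const I))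
    (fun x hx => ((hh' x hx).fun_sub ((hf.hasDerivAt_integral_left hx).div_const I)).congr_deriv
      (by ring))
    (fun x hx => hppos x (Ioo_subset_Icc_self hx))
    ((hmono.add_const I⁻¹).congr fun x hx => by
      have := (hppos x (Ioo_subset_Icc_self hx)).ne'
      simp only [f]; field_simp)
    hr
  have hwa : h a - (∫ t in a..b, f t) / I = 0 := by rw [ha, div_self hI.ne', sub_self]
  have hwb : h b - (∫ t in b..b, f t) / I = 0 := by
    rw [hb, intervalIntegral.integral_same, zero_div, sub_zero]
  simp only [hwa, hwb, max_self, sub_nonpos] at key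
  exact key

/-- comparison with the harmonic solution: a nonnegative solution of
`h'' + (m-1)(g'/g)h' = λ h` on `[a,b]` with `h(a)=1`, `h(b)=0` satisfies
`h(r) ≤ (∫_r^b g^{1-m})/(∫_a^b g^{1-m})`. -/
theorem stmt_8 (m : ℕ) (hm : 2 ≤ m) (lam a b : ℝ) (hlam : 0 < lam) (hab : a < b)
    (g h : ℝ → ℝ)
    (hg : ContDiffOn ℝ 1 g (Set.Icc a b))
    (hgpos : ∀ r ∈ Set.Icc a b, 0 < g r)
    (hh : ContDiffOn ℝ 2 h (Set.Icc a b))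
    (hhnn : ∀ r ∈ Set.Icc a b, 0 ≤ h r)
    (hva : h a = 1) (hvb : h b = 0)
    (hode : ∀ r ∈ Set.Icc a b,
      deriv (deriv h) r + ((m : ℝ) - 1) * (deriv g r / g r) * deriv h r = lam * h r) :
    ∀ r ∈ Set.Icc a b,
      h r ≤ (∫ t in r..b, (g t ^ (m - 1))⁻¹) / (∫ t in a..b, (g t ^ (m - 1))⁻¹) := by
  have hsub : Ioo a b ⊆ Icc a b := Ioo_subset_Icc_self
  have hnhds {x} (hx : x ∈ Ioo a b) : Icc a b ∈ 𝓝 x := Icc_mem_nhds hx.1 hx.2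
  have hmono : MonotoneOn (fun x => g x ^ (m - 1) * deriv h x) (Ioo a b) := by
    refine monotoneOn_pow_mul_of_nonneg
      (fun x hx => ((hg.contDiffAt (hnhds hx)).differentiableAt one_ne_zero).hasDerivAt)
      (fun x hx => hgpos x (hsub hx))
      (fun x hx => hh.hasDerivAt_deriv (by rwa [interior_Icc])) (fun x hx => ?_)
    rw [Nat.cast_sub (by omega), Nat.cast_one, hode x (hsub hx)]
    exact mul_nonneg hlam.le (hhnn x (hsub hx))
  intro r hr
  exact le_integral_inv_div_of_monotoneOn hab (hg.continuousOn.pow _)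
    (fun x hx => pow_pos (hgpos x hx) _) hh.continuousOn
    (fun x hx => ((hh.contDiffAt (hnhds hx)).differentiableAt two_ne_zero).hasDerivAt)
    hmono hva hvb hr
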